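/- Fix M > 0 and a real random variable ρ with P(ρ ∈ [0, M]) = 1 and P(ρ > 0) > 0. For each λ > 1/E(ρ²) let θ(λ) denote the unique positive solution of E(λρ²/(1 + λρθ(λ))) = 1. Then λ ↦ θ(λ) is continuous on (1/E(ρ²), +∞): for every λ > 1/E(ρ²) and every sequence λ_n ∈ (1/E(ρ²), +∞) with λ_n → λ one has θ(λ_n) → θ(λ). -/

import Mathlib

/-!
All values `θ(λₙ)` lie in `[0, M]`, since `λρ²/(1 + λρθ) ≤ ρ/θ ≤ M/θ`. By compactness every
subsequence of `θ(λₙ)` has a further subsequence converging to some `t ∈ [0, M]`, and dominated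
convergence (the integrands are bounded by `(λ + 1) M²`) passes the equation to the limit:
`E(λρ²/(1 + λρt)) = 1`. Since `P(ρ > 0) > 0`, the left side is strictly decreasing in `t`, so
`t = θ(λ)`.
-/

open MeasureTheory Filter Set Topology

theorem MeasureTheory.integral_lt_integral_of_ae_le_of_forall_mem_lt {α : Type*}
    [MeasurableSpace α] {μ : Measure α} {f g : α → ℝ} {s : Set α}
    (hf : Integrable f μ) (hg : Integrable g μ) (hle : f ≤ᵐ[μ] g) (hs : 0 < μ s)
    (hlt : ∀ x ∈ s, f x < g x) : ∫ x, f x ∂μ < ∫ x, g x ∂μ := by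
  have hpos : 0 < ∫ x, (g - f) x ∂μ := by
    rw [integral_pos_iff_support_of_nonneg_ae (by filter_upwards [hle] with x hx; simpa using hx)
      (hg.sub hf)]
    exact hs.trans_le <| measure_mono fun x hx => sub_ne_zero.mpr (hlt x hx).ne'
  rw [integral_sub' hg hf] at hpos
  linarith

/-- The left-hand side `E(lρ²/(1 + lρt))` of the equation defining `θ(l)`, for `ρ` of law `μ`. -/
noncomputable def thetaIntegral (μ : Measure ℝ) (l t : ℝ) : ℝ :=
  ∫ x, l * x ^ 2 / (1 + l * x * t) ∂μ

namespace thetaIntegral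

section Integrand

variable {l t x : ℝ}

lemma one_le_one_add_mul_mul (hl : 0 ≤ l) (hx : 0 ≤ x) (ht : 0 ≤ t) : 1 ≤ 1 + l * x * t :=
  le_add_of_nonneg_right (by positivity)

lemma integrand_nonneg (hl : 0 ≤ l) (hx : 0 ≤ x) (ht : 0 ≤ t) :
    0 ≤ l * x ^ 2 / (1 + l * x * t) := by
  have := one_le_one_add_mul_mul hl hx ht
  positivity

lemma integrand_le_mul_sq {M : ℝ} (hl : 0 ≤ l) (hx : x ∈ Icc 0 M) (ht : 0 ≤ t) :
    l * x ^ 2 / (1 + l * x * t) ≤ l * M ^ 2 :=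
  calc l * x ^ 2 / (1 + l * x * t) ≤ l * x ^ 2 :=
        div_le_self (by positivity) (one_le_one_add_mul_mul hl hx.1 ht)
    _ ≤ l * M ^ 2 := by gcongr; exacts [hx.1, hx.2]

lemma integrand_le_div (hl : 0 ≤ l) (hx : 0 ≤ x) (ht : 0 < t) :
    l * x ^ 2 / (1 + l * x * t) ≤ x / t := by
  have := one_le_one_add_mul_mul hl hx ht.le
  rw [div_le_div_iff₀ (by linarith) ht]
  nlinarith

lemma integrand_le_of_le (hl : 0 ≤ l) (hx : 0 ≤ x) (ht : 0 ≤ t) {t' : ℝ} (htt' : t ≤ t') :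
    l * x ^ 2 / (1 + l * x * t') ≤ l * x ^ 2 / (1 + l * x * t) := by
  have := one_le_one_add_mul_mul hl hx ht
  gcongr

lemma integrand_lt_of_lt (hl : 0 < l) (hx : 0 < x) (ht : 0 ≤ t) {t' : ℝ} (htt' : t < t') :
    l * x ^ 2 / (1 + l * x * t') < l * x ^ 2 / (1 + l * x * t) := by
  have := one_le_one_add_mul_mul hl.le hx.le ht
  gcongr

end Integrand

variable {μ : Measure ℝ} [IsProbabilityMeasure μ] {M : ℝ} (hμM : ∀ᵐ x ∂μ, x ∈ Icc 0 M)
include hμM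

lemma integrable {l t : ℝ} (hl : 0 ≤ l) (ht : 0 ≤ t) :
    Integrable (fun x => l * x ^ 2 / (1 + l * x * t)) μ := by
  refine Integrable.of_bound (Measurable.aestronglyMeasurable (by fun_prop)) (l * M ^ 2) ?_
  filter_upwards [hμM] with x hx
  rw [Real.norm_of_nonneg (integrand_nonneg hl hx.1 ht)]
  exact integrand_le_mul_sq hl hx ht

lemma le_of_eq_one {l t : ℝ} (hl : 0 ≤ l) (ht : 0 < t) (h : thetaIntegral μ l t = 1) : t ≤ M := by
  have : thetaIntegral μ l t ≤ M / t := by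
    refine (integral_mono_ae (integrable hμM hl ht.le) (integrable_const (M / t)) ?_).trans_eq
      (by simp)
    filter_upwards [hμM] with x hx
    exact (integrand_le_div hl hx.1 ht).trans (by gcongr; exact hx.2)
  rwa [h, le_div_iff₀ ht, one_mul] at this

lemma strictAntiOn {l : ℝ} (hl : 0 < l) (hμpos : 0 < μ (Ioi 0)) :
    StrictAntiOn (thetaIntegral μ l) (Ici 0) := by
  intro t ht t' ht' htt'
  refine integral_lt_integral_of_ae_le_of_forall_mem_lt (integrable hμM hl.le ht')
    (integrable hμM hl.le ht) ?_ hμpos fun x hx => integrand_lt_of_lt hl hx ht htt'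
  filter_upwards [hμM] with x hx
  exact integrand_le_of_le hl.le hx.1 ht htt'.le

lemma tendsto {ι : Type*} {L : Filter ι} [L.IsCountablyGenerated] {ls ts : ι → ℝ} {l t : ℝ}
    (hls : ∀ i, 0 ≤ ls i) (hts : ∀ i, 0 ≤ ts i) (hl : 0 ≤ l) (ht : 0 ≤ t)
    (hlsl : Tendsto ls L (𝓝 l)) (htst : Tendsto ts L (𝓝 t)) :
    Tendsto (fun i => thetaIntegral μ (ls i) (ts i)) L (𝓝 (thetaIntegral μ l t)) := by
  refine tendsto_integral_filter_of_dominated_convergence (fun _ => (l + 1) * M ^ 2)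
    (Eventually.of_forall fun i => Measurable.aestronglyMeasurable (by fun_prop)) ?_
    (integrable_const _) ?_
  · filter_upwards [hlsl.eventually_le_const (lt_add_one l)] with i hi
    filter_upwards [hμM] with x hx
    rw [Real.norm_of_nonneg (integrand_nonneg (hls i) hx.1 (hts i))]
    exact (integrand_le_mul_sq (hls i) hx (hts i)).trans (by gcongr)
  · filter_upwards [hμM] with x hx
    exact (hlsl.mul_const _).div (tendsto_const_nhds.add ((hlsl.mul_const x).mul htst))
      (zero_lt_one.trans_le (one_le_one_add_mul_mul hl hx.1 ht)).ne'

end thetaIntegral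

theorem theta_continuous_general (M : ℝ) (μ : Measure ℝ) [IsProbabilityMeasure μ]
    (hμM : μ (Set.Icc (0 : ℝ) M) = 1) (hμpos : 0 < μ (Set.Ioi (0 : ℝ)))
    (θ : ℝ → ℝ)
    (hθ : ∀ l : ℝ, 1 / (∫ x, x ^ 2 ∂μ) < l →
      0 < θ l ∧ ∫ x, l * x ^ 2 / (1 + l * x * θ l) ∂μ = 1)
    (l : ℝ) (hl : 1 / (∫ x, x ^ 2 ∂μ) < l)
    (lseq : ℕ → ℝ) (hlseq : ∀ n, 1 / (∫ x, x ^ 2 ∂μ) < lseq n)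
    (hlim : Tendsto lseq atTop (nhds l)) :
    Tendsto (fun n => θ (lseq n)) atTop (nhds (θ l)) := by
  have hae : ∀ᵐ x ∂μ, x ∈ Icc 0 M := (mem_ae_iff_prob_eq_one measurableSet_Icc).mpr hμM
  have hpos {l' : ℝ} (hl' : 1 / (∫ x, x ^ 2 ∂μ) < l') : 0 < l' :=
    (one_div_nonneg.mpr (integral_nonneg fun x => sq_nonneg x)).trans_lt hl'
  have hbound (n : ℕ) : θ (lseq n) ∈ Icc 0 M :=
    ⟨(hθ _ (hlseq n)).1.le, thetaIntegral.le_of_eq_one hae (hpos (hlseq n)).le (hθ _ (hlseq n)).1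
      (hθ _ (hlseq n)).2⟩
  refine tendsto_of_subseq_tendsto fun ns hns => ?_
  obtain ⟨t, ht, φ, hφ, hconv⟩ := isCompact_Icc.tendsto_subseq fun n => hbound (ns n)
  refine ⟨φ, ?_⟩
  have hlimit : thetaIntegral μ l t = 1 := by
    refine tendsto_nhds_unique (thetaIntegral.tendsto hae (fun _ => (hpos (hlseq _)).le)
      (fun _ => (hbound _).1) (hpos hl).le ht.1 (hlim.comp (hns.comp hφ.tendsto_atTop)) hconv) ?_
    simp only [Function.comp_apply, thetaIntegral, (hθ _ (hlseq _)).2, tendsto_const_nhds]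
  have ht_eq : t = θ l := (thetaIntegral.strictAntiOn hae (hpos hl) hμpos).injOn ht.1
    (hθ l hl).1.le (hlimit.trans (hθ l hl).2.symm)
  rwa [ht_eq] at hconv

/-- Fix `M > 0` and a real random variable `ρ` (with law `μ`) such that
`P(ρ ∈ [0, M]) = 1` and `P(ρ > 0) > 0`.  For each `λ > 1/E(ρ²)` let `θ(λ)` denote the unique
positive solution of `E(λρ²/(1 + λρθ(λ))) = 1`.  Then `λ ↦ θ(λ)` is continuous on
`(1/E(ρ²), +∞)`: for every `λ > 1/E(ρ²)` and every sequence `λ_n ∈ (1/E(ρ²), +∞)` with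
`λ_n → λ` one has `θ(λ_n) → θ(λ)`. -/
theorem theta_continuous (M : ℝ) (hM : 0 < M) (μ : Measure ℝ) [IsProbabilityMeasure μ]
    (hμM : μ (Set.Icc (0 : ℝ) M) = 1) (hμpos : 0 < μ (Set.Ioi (0 : ℝ)))
    (θ : ℝ → ℝ)
    (hθ : ∀ l : ℝ, 1 / (∫ x, x ^ 2 ∂μ) < l →
      0 < θ l ∧ ∫ x, l * x ^ 2 / (1 + l * x * θ l) ∂μ = 1)
    (l : ℝ) (hl : 1 / (∫ x, x ^ 2 ∂μ) < l)
    (lseq : ℕ → ℝ) (hlseq : ∀ n, 1 / (∫ x, x ^ 2 ∂μ) < lseq n)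
    (hlim : Tendsto lseq atTop (nhds l)) :
    Tendsto (fun n => θ (lseq n)) atTop (nhds (θ l)) :=
  theta_continuous_general M μ hμM hμpos θ hθ l hl lseq hlseq hlim
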